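/- For every history H, H satisfies SER if and only if H ⊨ Int and there exists an acyclic directed labeled graph that is SER-compatible with the commit-order hyper-polygraph of H. -/
import Mathlib


namespace DBIso

/-! ### Operations, transactions and histories -/

/-- An operation: a read `R(x,v)` or a write `W(x,v)` on key `x` with value `v`. -/
inductive Op (Key Val : Type) where
  | read  (k : Key) (v : Val)
  | write (k : Key) (v : Val)

variable {Key Val : Type}

/-- The key accessed by an operation. -/
def Op.key : Op Key Val → Key
  | .read k _ => k
  | .write k _ => k

/-- The value read or written by an operation. -/
def Op.val : Op Key Val → Val
  | .read _ w => w
  | .write _ w => w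

/-- A transaction: a finite nonempty set of (identified) operations together with
a strict total order on them (the program order), modelled as a nonempty list of
operations tagged by pairwise distinct operation identifiers; the list order is
the program order `po`. -/
structure Txn (Key Val : Type) where
  ops : List (ℕ × Op Key Val)
  ops_nonempty : ops ≠ []
  ids_nodup : (ops.map Prod.fst).Nodup

/-- The operation of `T` at position `i` (in program order). -/
def Txn.opAt (T : Txn Key Val) (i : Fin T.ops.length) : Op Key Val :=
  (T.ops.get i).2

/-- `T ⊢ W(x,v)`: `T` writes to key `x` and `v` is the po-last value it writes to `x`. -/
def Txn.FWrites (T : Txn Key Val) (x : Key) (v : Val) : Prop :=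
  ∃ i : Fin T.ops.length, T.opAt i = Op.write x v ∧
    ∀ j : Fin T.ops.length, i < j → ∀ w : Val, T.opAt j ≠ Op.write x w

/-- `T ∈ WriteTx_x` : `T` writes to key `x`. -/
def Txn.WritesKey (T : Txn Key Val) (x : Key) : Prop :=
  ∃ v : Val, T.FWrites x v

/-- `T ⊢ R(x,v)`: `T` reads `x` before writing to it and `v` is the value returned
by the po-first such read (equivalently, the po-first operation of `T` on `x` is a
read returning `v`). -/
def Txn.FReads (T : Txn Key Val) (x : Key) (v : Val) : Prop :=
  ∃ i : Fin T.ops.length, T.opAt i = Op.read x v ∧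
    ∀ j : Fin T.ops.length, j < i → (T.opAt j).key ≠ x

/-- Internal consistency of a transaction: every read of a key `x` that is po-preceded
by an operation on `x` returns the value of the po-latest preceding operation on `x`. -/
def Txn.Internal (T : Txn Key Val) : Prop :=
  ∀ i j : Fin T.ops.length, j < i → ∀ (x : Key) (v : Val),
    T.opAt i = Op.read x v → (T.opAt j).key = x →
    (∀ k : Fin T.ops.length, j < k → k < i → (T.opAt k).key ≠ x) →
    (T.opAt j).val = v

/-- A history: a finite set of transactions with pairwise disjoint operation sets,
together with the session order `SO` (a union of strict total orders on the disjoint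
subsets, given by `sess`, partitioning the transactions), and a distinguished initial
transaction `init` (`T_⊥`) writing to every key and `SO`-preceding every other
transaction. -/
structure History (Key Val : Type) where
  txns : Set (Txn Key Val)
  txns_finite : txns.Finite
  SO : Txn Key Val → Txn Key Val → Prop
  sess : Txn Key Val → ℕ
  init : Txn Key Val
  ops_disjoint : ∀ T ∈ txns, ∀ S ∈ txns, T ≠ S →
      ∀ i ∈ T.ops.map Prod.fst, i ∉ S.ops.map Prod.fst
  so_mem : ∀ T S, SO T S → T ∈ txns ∧ S ∈ txns
  so_irrefl : ∀ T, ¬ SO T T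
  so_trans : ∀ T S U, SO T S → SO S U → SO T U
  so_total_sess : ∀ T ∈ txns, ∀ S ∈ txns, T ≠ S → sess T = sess S → SO T S ∨ SO S T
  so_sess : ∀ T S, SO T S → sess T = sess S ∨ T = init
  init_mem : init ∈ txns
  init_writes : ∀ x : Key, ∃ v : Val, init.FWrites x v
  init_so : ∀ T ∈ txns, T ≠ init → SO init T

/-- `H ⊨ Int`: every transaction of `H` is internally consistent. -/
def History.SatInt (H : History Key Val) : Prop :=
  ∀ T ∈ H.txns, T.Internal

/-- `r` is a strict total order on the set `s`. -/
def IsStrictTotalOrderOn {α : Type*} (s : Set α) (r : α → α → Prop) : Prop :=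
  (∀ a b, r a b → a ∈ s ∧ b ∈ s) ∧
  (∀ a, ¬ r a a) ∧
  (∀ a b c, r a b → r b c → r a c) ∧
  (∀ a ∈ s, ∀ b ∈ s, a ≠ b → r a b ∨ r b a)

/-- `H` satisfies SER: `H ⊨ Int` and there is a strict total order `co` on the
transactions of `H` extending `SO` such that every read `S ⊢ R(x,v)` reads the
value written by the `co`-greatest `co`-predecessor of `S` writing `x`. -/
def History.SatSER (H : History Key Val) : Prop :=
  H.SatInt ∧
  ∃ co : Txn Key Val → Txn Key Val → Prop,
    IsStrictTotalOrderOn H.txns co ∧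
    (∀ T S, H.SO T S → co T S) ∧
    ∀ S ∈ H.txns, ∀ (x : Key) (v : Val), S.FReads x v →
      ∃ T', co T' S ∧ T'.WritesKey x ∧
        (∀ T, co T S → T.WritesKey x → T = T' ∨ co T T') ∧
        T'.FWrites x v

/-! ### Dependency graphs -/

/-- `(WR, WW, RW)` extend the history `H` to a dependency graph. -/
def IsDepGraph (H : History Key Val)
    (WR WW RW : Key → Txn Key Val → Txn Key Val → Prop) : Prop :=
  (∀ (x : Key) (T S : Txn Key Val), WR x T S → T ∈ H.txns ∧ S ∈ H.txns) ∧
  (∀ x : Key, ∀ S ∈ H.txns, (∃ v, S.FReads x v) → ∃! T, WR x T S) ∧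
  (∀ (x : Key) (T S : Txn Key Val), WR x T S →
      T ≠ S ∧ ∃ v, T.FWrites x v ∧ S.FReads x v) ∧
  (∀ x : Key, IsStrictTotalOrderOn {T | T ∈ H.txns ∧ T.WritesKey x} (WW x)) ∧
  (∀ (x : Key) (T S : Txn Key Val),
      RW x T S ↔ T ≠ S ∧ ∃ T', WR x T' T ∧ WW x T' S)

/-- A binary relation is acyclic iff its transitive closure is irreflexive. -/
def RelAcyclic {α : Type*} (r : α → α → Prop) : Prop :=
  ∀ a, ¬ Relation.TransGen r a a

/-- The union `SO ∪ WR ∪ WW ∪ RW` as a binary relation on transactions. -/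
def DepUnion (H : History Key Val)
    (WR WW RW : Key → Txn Key Val → Txn Key Val → Prop) :
    Txn Key Val → Txn Key Val → Prop :=
  fun T S => H.SO T S ∨ (∃ x, WR x T S) ∨ (∃ x, WW x T S) ∨ (∃ x, RW x T S)

/-- The relation `(SO ∪ WR ∪ WW) ; RW?`. -/
def SIRel (H : History Key Val)
    (WR WW RW : Key → Txn Key Val → Txn Key Val → Prop) :
    Txn Key Val → Txn Key Val → Prop :=
  fun T S => ∃ U, (H.SO T U ∨ (∃ x, WR x T U) ∨ (∃ x, WW x T U)) ∧
    (U = S ∨ ∃ x, RW x U S)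

/-- `H` satisfies SI: `H ⊨ Int` and there exist `WR, WW, RW` extending `H` to a
dependency graph with `(SO ∪ WR ∪ WW) ; RW?` acyclic. -/
def History.SatSI (H : History Key Val) : Prop :=
  H.SatInt ∧ ∃ WR WW RW, IsDepGraph H WR WW RW ∧ RelAcyclic (SIRel H WR WW RW)

/-! ### Labeled edges and hyper-polygraphs -/

/-- Dependency edge labels. -/
inductive DepLbl (Key : Type) where
  | SO
  | WR (x : Key)
  | WW (x : Key)
  | RW (x : Key)

/-- A directed labeled edge. -/
structure LEdge (V L : Type) where
  src : V
  dst : V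
  lbl : L

variable {V L : Type}

abbrev DepEdge (V Key : Type) := LEdge V (DepLbl Key)
abbrev DepEdgeSet (V Key : Type) := Set (DepEdge V Key)

/-- There is an edge of `E` from `a` to `b`. -/
def EStep (E : Set (LEdge V L)) (a b : V) : Prop := ∃ l, LEdge.mk a b l ∈ E

/-- A set of labeled edges is cyclic iff some vertex has a nonempty edge path to itself. -/
def EdgeCyclic (E : Set (LEdge V L)) : Prop := ∃ a, Relation.TransGen (EStep E) a a

/-- `a ⤳ b`: there is a (possibly empty) edge path of `E` from `a` to `b`. -/
def EReach (E : Set (LEdge V L)) (a b : V) : Prop := Relation.ReflTransGen (EStep E) a b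

/-- A hyper-polygraph over the vertex type `V`: a known edge set `E` together with
the constraint collections `C^WW` and `C^WR`. -/
structure HyperPolygraph (V Key : Type) where
  E : DepEdgeSet V Key
  CWW : Set (DepEdgeSet V Key)
  CWR : Set (DepEdgeSet V Key)

/-- A directed labeled graph (given by its edge set `E'` over the same vertex set)
is compatible with the hyper-polygraph `G`. -/
def Compatible (G : HyperPolygraph V Key) (E' : DepEdgeSet V Key) : Prop :=
  G.E ⊆ E' ∧
  (∀ (x : Key) (T T' S : V), T ≠ S →
      LEdge.mk T' T (DepLbl.WR x) ∈ E' → LEdge.mk T' S (DepLbl.WW x) ∈ E' →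
      LEdge.mk T S (DepLbl.RW x) ∈ E') ∧
  (∀ C ∈ G.CWW ∪ G.CWR, ∃! e, e ∈ E' ∧ e ∈ C)

/-- A hyper-polygraph is SER-acyclic iff some acyclic graph is compatible with it. -/
def SERAcyclic (G : HyperPolygraph V Key) : Prop :=
  ∃ E', Compatible G E' ∧ ¬ EdgeCyclic E'

/-- The vertex set of the hyper-polygraph of a history: its transactions. -/
abbrev History.Vert (H : History Key Val) : Type := {T : Txn Key Val // T ∈ H.txns}

/-- The hyper-polygraph of a history `H`. -/
def History.hpg (H : History Key Val) : HyperPolygraph H.Vert Key where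
  E := {e | (e.lbl = DepLbl.SO ∧ H.SO e.src.1 e.dst.1) ∨
        (∃ (x : Key) (v : Val), e.lbl = DepLbl.WR x ∧
          e.dst.1.FReads x v ∧ e.src.1.FWrites x v ∧ e.src ≠ e.dst ∧
          (∀ T : H.Vert, T.1.FWrites x v → T ≠ e.dst → T = e.src))}
  CWW := {C | ∃ (x : Key) (T S : H.Vert), T ≠ S ∧
        T.1.WritesKey x ∧ S.1.WritesKey x ∧
        C = {LEdge.mk T S (DepLbl.WW x), LEdge.mk S T (DepLbl.WW x)}}
  CWR := {C | ∃ (x : Key) (S : H.Vert) (v : Val), S.1.FReads x v ∧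
        C = {e | ∃ T : H.Vert, T.1.FWrites x v ∧ T ≠ S ∧ e = LEdge.mk T S (DepLbl.WR x)}}

/-- The induced SI graph of a directed labeled graph:
`(E'_SO ∪ E'_WR ∪ E'_WW) ; (E'_RW)?`. -/
def InducedSI (E' : DepEdgeSet V Key) : V → V → Prop :=
  fun a b => ∃ c : V,
    (LEdge.mk a c DepLbl.SO ∈ E' ∨ (∃ x, LEdge.mk a c (DepLbl.WR x) ∈ E') ∨
      (∃ x, LEdge.mk a c (DepLbl.WW x) ∈ E')) ∧
    (c = b ∨ ∃ x, LEdge.mk c b (DepLbl.RW x) ∈ E')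

/-! ### Commit-order hyper-polygraphs -/

/-- Labels for commit-order hyper-polygraphs. -/
inductive COLbl (Key : Type) where
  | SO
  | WR (x : Key)
  | CO

abbrev COEdge (V Key : Type) := LEdge V (COLbl Key)

/-- A commit-order hyper-polygraph. -/
structure COHyperPolygraph (V Key : Type) where
  E : Set (COEdge V Key)
  CCO : Set (Set (COEdge V Key))
  CWR : Set (Set (COEdge V Key))

/-- The commit-order hyper-polygraph of a history `H`. -/
def History.cohpg (H : History Key Val) : COHyperPolygraph H.Vert Key where
  E := {e | (e.lbl = COLbl.SO ∧ H.SO e.src.1 e.dst.1) ∨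
        (∃ (x : Key) (v : Val), e.lbl = COLbl.WR x ∧
          e.dst.1.FReads x v ∧ e.src.1.FWrites x v ∧ e.src ≠ e.dst ∧
          (∀ T : H.Vert, T.1.FWrites x v → T ≠ e.dst → T = e.src))}
  CCO := {C | ∃ T S : H.Vert, T ≠ S ∧
        C = {LEdge.mk T S COLbl.CO, LEdge.mk S T COLbl.CO}}
  CWR := {C | ∃ (x : Key) (S : H.Vert) (v : Val), S.1.FReads x v ∧
        C = {e | ∃ T : H.Vert, T.1.FWrites x v ∧ T ≠ S ∧ e = LEdge.mk T S (COLbl.WR x)}}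

/-- A directed labeled graph (given by its edge set `E'`) is SER-compatible with the
commit-order hyper-polygraph of the history `H`. -/
def SERCompatible (H : History Key Val) (E' : Set (COEdge H.Vert Key)) : Prop :=
  H.cohpg.E ⊆ E' ∧
  (∀ C ∈ H.cohpg.CCO ∪ H.cohpg.CWR, ∃! e, e ∈ E' ∧ e ∈ C) ∧
  (∀ (x : Key) (T₁ T₂ T₃ : H.Vert), T₁ ≠ T₂ →
      LEdge.mk T₁ T₃ (COLbl.WR x) ∈ E' → T₂.1.WritesKey x →
      LEdge.mk T₂ T₃ COLbl.CO ∈ E' → LEdge.mk T₂ T₁ COLbl.CO ∈ E')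

/-- The read-from conditions of a dependency graph on a family `WR`. -/
def ReadFromConds (H : History Key Val)
    (WR : Key → Txn Key Val → Txn Key Val → Prop) : Prop :=
  (∀ (x : Key) (T S : Txn Key Val), WR x T S → T ∈ H.txns ∧ S ∈ H.txns) ∧
  (∀ x : Key, ∀ S ∈ H.txns, (∃ v, S.FReads x v) → ∃! T, WR x T S) ∧
  (∀ (x : Key) (T S : Txn Key Val), WR x T S →
      T ≠ S ∧ ∃ v, T.FWrites x v ∧ S.FReads x v)

/-! ### The pruning transition system -/

/-- `{(S,T',RW,x) : (T,S,WR,x) ∈ E, S ≠ T'}`: the RW edges derived from the WW edge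
`(T,T',WW,x)` and the WR edges of `E`. -/
def DerivedRWofWW (E : DepEdgeSet V Key) (T T' : V) (x : Key) : DepEdgeSet V Key :=
  {e | ∃ S : V, LEdge.mk T S (DepLbl.WR x) ∈ E ∧ S ≠ T' ∧
      e = LEdge.mk S T' (DepLbl.RW x)}

/-- `{(S,T',RW,x) : (T,T',WW,x) ∈ E, S ≠ T'}`: the RW edges derived from the WR edge
`(T,S,WR,x)` and the WW edges of `E`. -/
def DerivedRWofWR (E : DepEdgeSet V Key) (T S : V) (x : Key) : DepEdgeSet V Key :=
  {e | ∃ T' : V, LEdge.mk T T' (DepLbl.WW x) ∈ E ∧ S ≠ T' ∧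
      e = LEdge.mk S T' (DepLbl.RW x)}

/-- States of the pruning transition system: a triple `⟨E, C^WW, C^WR⟩` or the
terminal state `S#` (`bad`). -/
inductive PState (V Key : Type) where
  | node (E : DepEdgeSet V Key) (CWW CWR : Set (DepEdgeSet V Key)) : PState V Key
  | bad : PState V Key

/-- The pruning transition relation `↪`. -/
inductive PruneStep : PState V Key → PState V Key → Prop where
  | noChoice {E : DepEdgeSet V Key} {CWW CWR : Set (DepEdgeSet V Key)}
      (h : (∅ : DepEdgeSet V Key) ∈ CWW ∪ CWR) :
      PruneStep (.node E CWW CWR) .bad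
  | cyc {E : DepEdgeSet V Key} {CWW CWR : Set (DepEdgeSet V Key)}
      (h : EdgeCyclic E) :
      PruneStep (.node E CWW CWR) .bad
  | wwElim {E : DepEdgeSet V Key} {CWW CWR : Set (DepEdgeSet V Key)}
      {cons : DepEdgeSet V Key} {T T' : V} {x : Key}
      (hc : cons ∈ CWW) (he : LEdge.mk T T' (DepLbl.WW x) ∈ cons)
      (hcyc : EdgeCyclic (E ∪ {LEdge.mk T T' (DepLbl.WW x)} ∪ DerivedRWofWW E T T' x)) :
      PruneStep (.node E CWW CWR)
        (.node E ((CWW \ {cons}) ∪ {cons \ {LEdge.mk T T' (DepLbl.WW x)}}) CWR)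
  | wrElim {E : DepEdgeSet V Key} {CWW CWR : Set (DepEdgeSet V Key)}
      {cons : DepEdgeSet V Key} {T S : V} {x : Key}
      (hc : cons ∈ CWR) (he : LEdge.mk T S (DepLbl.WR x) ∈ cons)
      (hcyc : EdgeCyclic (E ∪ {LEdge.mk T S (DepLbl.WR x)} ∪ DerivedRWofWR E T S x)) :
      PruneStep (.node E CWW CWR)
        (.node E CWW ((CWR \ {cons}) ∪ {cons \ {LEdge.mk T S (DepLbl.WR x)}}))
  | wwIntro {E : DepEdgeSet V Key} {CWW CWR : Set (DepEdgeSet V Key)}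
      {T T' : V} {x : Key}
      (hc : ({LEdge.mk T T' (DepLbl.WW x)} : DepEdgeSet V Key) ∈ CWW) :
      PruneStep (.node E CWW CWR)
        (.node (E ∪ {LEdge.mk T T' (DepLbl.WW x)} ∪ DerivedRWofWW E T T' x)
          (CWW \ {{LEdge.mk T T' (DepLbl.WW x)}}) CWR)
  | wrIntro {E : DepEdgeSet V Key} {CWW CWR : Set (DepEdgeSet V Key)}
      {T S : V} {x : Key}
      (hc : ({LEdge.mk T S (DepLbl.WR x)} : DepEdgeSet V Key) ∈ CWR) :
      PruneStep (.node E CWW CWR)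
        (.node (E ∪ {LEdge.mk T S (DepLbl.WR x)} ∪ DerivedRWofWR E T S x)
          CWW (CWR \ {{LEdge.mk T S (DepLbl.WR x)}}))

/-! ### Boolean encoding -/

/-- The edges occurring in some constraint of `G` (i.e. the edges carrying a
Boolean variable, besides the RW variables). -/
def ConsEdges (G : HyperPolygraph V Key) : DepEdgeSet V Key :=
  ⋃₀ (G.CWW ∪ G.CWR)

/-- The truth value, under the assignment `α`, of the literal associated with an
edge: the constant true if the edge lies in `G.E`, and its variable's value
otherwise. -/
def EdgeVal (G : HyperPolygraph V Key) (α : DepEdge V Key → Prop)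
    (e : DepEdge V Key) : Prop :=
  e ∈ G.E ∨ α e

/-- `α` satisfies the Boolean encoding `Φ_G` of the hyper-polygraph `G`. -/
def SatPhi (G : HyperPolygraph V Key) (α : DepEdge V Key → Prop) : Prop :=
  (∀ C ∈ G.CWW ∪ G.CWR, ∃ e ∈ C, α e) ∧
  (∀ C ∈ G.CWW ∪ G.CWR, ∀ e ∈ C, ∀ e' ∈ C, e ≠ e' → ¬(α e ∧ α e')) ∧
  (∀ (x : Key) (T T' S : V), S ≠ T' →
      (LEdge.mk T T' (DepLbl.WW x) ∈ G.E ∨ LEdge.mk T T' (DepLbl.WW x) ∈ ConsEdges G) →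
      (LEdge.mk T S (DepLbl.WR x) ∈ G.E ∨ LEdge.mk T S (DepLbl.WR x) ∈ ConsEdges G) →
      EdgeVal G α (LEdge.mk T T' (DepLbl.WW x)) →
      EdgeVal G α (LEdge.mk T S (DepLbl.WR x)) →
      α (LEdge.mk S T' (DepLbl.RW x)))

/-- The graph induced by the assignment `α`: `G.E` together with all constraint
edges and RW edges whose variables `α` sets to true. -/
def InducedOf (G : HyperPolygraph V Key) (α : DepEdge V Key → Prop) :
    DepEdgeSet V Key :=
  G.E ∪ {e | e ∈ ConsEdges G ∧ α e} ∪
    {e | (∃ (x : Key) (S T' : V), S ≠ T' ∧ e = LEdge.mk S T' (DepLbl.RW x)) ∧ α e}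

/-- `α` satisfies all 2-width-cycle clauses of `G`. -/
def SatPairClauses (G : HyperPolygraph V Key) (α : DepEdge V Key → Prop) : Prop :=
  (∀ e₁ e₂ : DepEdge V Key, e₁ ∈ ConsEdges G → e₂ ∈ ConsEdges G → e₁ ≠ e₂ →
      EReach G.E e₁.dst e₂.src → EReach G.E e₂.dst e₁.src → ¬(α e₁ ∧ α e₂)) ∧
  (∀ (x : Key) (T T' S : V), T' ≠ T → T' ≠ S → EReach G.E T' S →
      LEdge.mk T T' (DepLbl.WW x) ∈ ConsEdges G →
      LEdge.mk T S (DepLbl.WR x) ∈ ConsEdges G →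
      ¬(α (LEdge.mk T T' (DepLbl.WW x)) ∧ α (LEdge.mk T S (DepLbl.WR x))))

private lemma freads_val_unique {T : Txn Key Val} {x : Key} {v v' : Val}
    (h : T.FReads x v) (h' : T.FReads x v') : v = v' := by
  obtain ⟨i, hi, hmin⟩ := h
  obtain ⟨i', hi', hmin'⟩ := h'
  rcases lt_trichotomy i i' with hlt | heq | hlt
  · exact absurd (by rw [hi]; rfl) (hmin' i hlt)
  · subst heq; rw [hi] at hi'; injection hi' with h1 h2
  · exact absurd (by rw [hi']; rfl) (hmin i' hlt)

/-- Theorem (SER via commit-order hyper-polygraphs): `H` satisfies SER iff `H ⊨ Int`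
and there exists an acyclic directed labeled graph that is SER-compatible with the
commit-order hyper-polygraph of `H`. -/
theorem ser_iff_exists_acyclic_sercompatible (Key Val : Type) (H : History Key Val) :
    H.SatSER ↔
      H.SatInt ∧ ∃ E' : Set (COEdge H.Vert Key),
        SERCompatible H E' ∧ ¬ EdgeCyclic E' := by
  constructor
  · -- forward direction
    rintro ⟨hInt, co, ⟨hmem, hirr, htr, htot⟩, hSOco, hread⟩
    refine ⟨hInt, ?_⟩
    set Wsel : Key → H.Vert → H.Vert → Prop := fun x T S =>
      ∃ v, S.1.FReads x v ∧ T.1.FWrites x v ∧ co T.1 S.1 ∧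
        ∀ U, co U S.1 → U.WritesKey x → U = T.1 ∨ co U T.1 with hWsel
    refine ⟨{e | (e.lbl = COLbl.SO ∧ H.SO e.src.1 e.dst.1) ∨
        (e.lbl = COLbl.CO ∧ co e.src.1 e.dst.1) ∨
        (∃ x, e.lbl = COLbl.WR x ∧ Wsel x e.src e.dst)}, ⟨?_, ?_, ?_⟩, ?_⟩
    · -- cohpg.E ⊆ E'
      rintro e (⟨h1, h2⟩ | ⟨x, v, hl, hr, hw, hne, hun⟩)
      · exact Or.inl ⟨h1, h2⟩
      · refine Or.inr (Or.inr ⟨x, hl, v, hr, hw, ?_, ?_⟩)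
        all_goals {
          obtain ⟨T', hco, hwk, hmax, hfw⟩ := hread e.dst.1 e.dst.2 x v hr
          have hT'mem : T' ∈ H.txns := (hmem _ _ hco).1
          have hTne : (⟨T', hT'mem⟩ : H.Vert) ≠ e.dst := by
            intro h
            have hv : T' = e.dst.1 := by rw [← h]
            rw [hv] at hco
            exact hirr _ hco
          have hTe : T' = e.src.1 := congrArg Subtype.val (hun ⟨T', hT'mem⟩ hfw hTne)
          rw [hTe] at hco hmax
          first
          | exact hco
          | exact hmax }
    · -- constraints uniquely satisfied
      rintro C (⟨T, S, hTS, rfl⟩ | ⟨x, S, v, hr, rfl⟩)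
      · -- CCO constraint
        have hTS' : T.1 ≠ S.1 := fun h => hTS (Subtype.ext h)
        rcases htot T.1 T.2 S.1 S.2 hTS' with h | h
        · refine ⟨LEdge.mk T S COLbl.CO, ⟨Or.inr (Or.inl ⟨rfl, h⟩), Or.inl rfl⟩, ?_⟩
          rintro e ⟨heE, heC⟩
          rcases heC with rfl | heC
          · rfl
          · rw [Set.mem_singleton_iff] at heC; subst heC
            rcases heE with ⟨hl, _⟩ | ⟨_, hco⟩ | ⟨x, hl, _⟩
            · exact absurd hl (by simp)
            · exact absurd (htr _ _ _ h hco) (hirr _)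
            · exact absurd hl (by simp)
        · refine ⟨LEdge.mk S T COLbl.CO,
            ⟨Or.inr (Or.inl ⟨rfl, h⟩), Or.inr (Set.mem_singleton _)⟩, ?_⟩
          rintro e ⟨heE, heC⟩
          rcases heC with rfl | heC
          · rcases heE with ⟨hl, _⟩ | ⟨_, hco⟩ | ⟨x, hl, _⟩
            · exact absurd hl (by simp)
            · exact absurd (htr _ _ _ h hco) (hirr _)
            · exact absurd hl (by simp)
          · rw [Set.mem_singleton_iff] at heC; exact heC
      · -- CWR constraint
        obtain ⟨T', hco, hwk, hmax, hfw⟩ := hread S.1 S.2 x v hr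
        have hT'mem : T' ∈ H.txns := (hmem _ _ hco).1
        have hTne : (⟨T', hT'mem⟩ : H.Vert) ≠ S := by
          intro h
          have hv : T' = S.1 := by rw [← h]
          rw [hv] at hco
          exact hirr _ hco
        refine ⟨LEdge.mk ⟨T', hT'mem⟩ S (COLbl.WR x),
          ⟨Or.inr (Or.inr ⟨x, rfl, v, hr, hfw, hco, hmax⟩),
           ⟨⟨T', hT'mem⟩, hfw, hTne, rfl⟩⟩, ?_⟩
        rintro e ⟨heE, T₂, hfw₂, hne₂, rfl⟩
        rcases heE with ⟨hl, _⟩ | ⟨hl, _⟩ | ⟨x', hl, v'', hr'', hfw'', hco₂, hmax₂⟩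
        · exact absurd hl (by simp)
        · exact absurd hl (by simp)
        · have hx : x' = x := by injection hl with h; exact h.symm
          subst hx
          have hT₂T' : T₂.1 = T' := by
            rcases hmax T₂.1 hco₂ ⟨v, hfw₂⟩ with h | h
            · exact h
            · rcases hmax₂ T' hco hwk with h' | h'
              · exact h'.symm
              · exact absurd (htr _ _ _ h h') (hirr _)
          have : T₂ = (⟨T', hT'mem⟩ : H.Vert) := Subtype.ext hT₂T'
          rw [this]
    · -- third SERCompatible condition
      rintro x T₁ T₂ T₃ hne hWR hwk hCO
      rcases hWR with ⟨hl, _⟩ | ⟨hl, _⟩ | ⟨x', hl, v, hr, hfw, hco, hmax⟩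
      · exact absurd hl (by simp)
      · exact absurd hl (by simp)
      · have hx : x' = x := by injection hl with h; exact h.symm
        subst hx
        rcases hCO with ⟨hl', _⟩ | ⟨_, hco₂⟩ | ⟨x'', hl', _⟩
        · exact absurd hl' (by simp)
        · rcases hmax T₂.1 hco₂ hwk with h | h
          · exact absurd (Subtype.ext h).symm hne
          · exact Or.inr (Or.inl ⟨rfl, h⟩)
        · exact absurd hl' (by simp)
    · -- acyclicity
      rintro ⟨a, hcyc⟩
      have keystep : ∀ p q : H.Vert, EStep {e | (e.lbl = COLbl.SO ∧ H.SO e.src.1 e.dst.1) ∨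
          (e.lbl = COLbl.CO ∧ co e.src.1 e.dst.1) ∨
          (∃ x, e.lbl = COLbl.WR x ∧ Wsel x e.src e.dst)} p q → co p.1 q.1 := by
        rintro p q ⟨l, hmem'⟩
        rcases hmem' with ⟨_, h⟩ | ⟨_, h⟩ | ⟨x, _, v, _, _, h, _⟩
        · exact hSOco _ _ h
        · exact h
        · exact h
      have key : ∀ p q : H.Vert, Relation.TransGen
          (EStep {e | (e.lbl = COLbl.SO ∧ H.SO e.src.1 e.dst.1) ∨
            (e.lbl = COLbl.CO ∧ co e.src.1 e.dst.1) ∨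
            (∃ x, e.lbl = COLbl.WR x ∧ Wsel x e.src e.dst)}) p q → co p.1 q.1 := by
        intro p q h
        induction h with
        | single h => exact keystep _ _ h
        | tail _ h ih => exact htr _ _ _ ih (keystep _ _ h)
      exact hirr _ (key a a hcyc)
  · -- backward direction
    rintro ⟨hInt, E', ⟨hsub, huniq, hcomp⟩, hacyc⟩
    have cyc1 : ∀ (a : H.Vert) (l : COLbl Key), LEdge.mk a a l ∈ E' → False := by
      intro a l h
      exact hacyc ⟨a, Relation.TransGen.single ⟨l, h⟩⟩
    have cyc2 : ∀ (a b : H.Vert) (l₁ l₂ : COLbl Key),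
        LEdge.mk a b l₁ ∈ E' → LEdge.mk b a l₂ ∈ E' → False := by
      intro a b l₁ l₂ h1 h2
      exact hacyc ⟨a, Relation.TransGen.tail (Relation.TransGen.single ⟨l₁, h1⟩) ⟨l₂, h2⟩⟩
    have cyc3 : ∀ (a b c : H.Vert) (l₁ l₂ l₃ : COLbl Key),
        LEdge.mk a b l₁ ∈ E' → LEdge.mk b c l₂ ∈ E' → LEdge.mk c a l₃ ∈ E' → False := by
      intro a b c l₁ l₂ l₃ h1 h2 h3
      exact hacyc ⟨a, Relation.TransGen.tail
        (Relation.TransGen.tail (Relation.TransGen.single ⟨l₁, h1⟩) ⟨l₂, h2⟩) ⟨l₃, h3⟩⟩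
    have total' : ∀ T S : H.Vert, T ≠ S →
        LEdge.mk T S COLbl.CO ∈ E' ∨ LEdge.mk S T COLbl.CO ∈ E' := by
      intro T S hne
      have hC : ({LEdge.mk T S COLbl.CO, LEdge.mk S T COLbl.CO} :
          Set (COEdge H.Vert Key)) ∈ H.cohpg.CCO := ⟨T, S, hne, rfl⟩
      obtain ⟨e, ⟨heE, heC⟩, _⟩ := huniq _ (Or.inl hC)
      rcases heC with rfl | heC
      · exact Or.inl heE
      · rw [Set.mem_singleton_iff] at heC; subst heC; exact Or.inr heE
    refine ⟨hInt, fun T S => ∃ (hT : T ∈ H.txns) (hS : S ∈ H.txns),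
        LEdge.mk ⟨T, hT⟩ ⟨S, hS⟩ COLbl.CO ∈ E', ⟨?_, ?_, ?_, ?_⟩, ?_, ?_⟩
    · rintro a b ⟨ha, hb, _⟩; exact ⟨ha, hb⟩
    · rintro T ⟨h1, h2, h⟩; exact cyc1 ⟨T, h1⟩ COLbl.CO h
    · rintro T S U ⟨hT, hS, h1⟩ ⟨hS', hU, h2⟩
      by_cases hTU : T = U
      · subst hTU
        exact absurd h2 (fun h2 => cyc2 ⟨T, hT⟩ ⟨S, hS⟩ _ _ h1 h2)
      · rcases total' ⟨T, hT⟩ ⟨U, hU⟩ (fun h => hTU (congrArg Subtype.val h)) with h | h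
        · exact ⟨hT, hU, h⟩
        · exact absurd h (fun h => cyc3 ⟨T, hT⟩ ⟨S, hS⟩ ⟨U, hU⟩ _ _ _ h1 h2 h)
    · intro T hT S hS hne
      rcases total' ⟨T, hT⟩ ⟨S, hS⟩ (fun h => hne (congrArg Subtype.val h)) with h | h
      · exact Or.inl ⟨hT, hS, h⟩
      · exact Or.inr ⟨hS, hT, h⟩
    · -- SO ⊆ co
      intro T S hSO
      obtain ⟨hT, hS⟩ := H.so_mem T S hSO
      have hne : T ≠ S := fun h => H.so_irrefl T (h ▸ hSO)
      have hSOe : LEdge.mk ⟨T, hT⟩ ⟨S, hS⟩ COLbl.SO ∈ E' := hsub (Or.inl ⟨rfl, hSO⟩)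
      rcases total' ⟨T, hT⟩ ⟨S, hS⟩ (fun h => hne (congrArg Subtype.val h)) with h | h
      · exact ⟨hT, hS, h⟩
      · exact absurd h (fun h => cyc2 ⟨T, hT⟩ ⟨S, hS⟩ _ _ hSOe h)
    · -- reads
      intro S hS x v hr
      have hC : ({e | ∃ T : H.Vert, T.1.FWrites x v ∧ T ≠ (⟨S, hS⟩ : H.Vert) ∧
          e = LEdge.mk T ⟨S, hS⟩ (COLbl.WR x)} : Set (COEdge H.Vert Key)) ∈ H.cohpg.CWR :=
        ⟨x, ⟨S, hS⟩, v, hr, rfl⟩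
      obtain ⟨e, ⟨heE, T, hfw, hne, rfl⟩, _⟩ := huniq _ (Or.inr hC)
      have hcoTS : LEdge.mk T ⟨S, hS⟩ COLbl.CO ∈ E' := by
        rcases total' T ⟨S, hS⟩ hne with h | h
        · exact h
        · exact absurd h (fun h => cyc2 T ⟨S, hS⟩ _ _ heE h)
      refine ⟨T.1, ⟨T.2, hS, hcoTS⟩, ⟨v, hfw⟩, ?_, hfw⟩
      intro U hcoU hUwk
      by_cases hUT : U = T.1
      · exact Or.inl hUT
      · obtain ⟨hU, hS', hUe⟩ := hcoU
        have : LEdge.mk (⟨U, hU⟩ : H.Vert) T COLbl.CO ∈ E' :=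
          hcomp x T ⟨U, hU⟩ ⟨S, hS⟩ (fun h => hUT (congrArg Subtype.val h).symm)
            heE hUwk hUe
        exact Or.inr ⟨hU, T.2, this⟩

end DBIso
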